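/- Let k ≥ 3 and G = C(3k+1; {1,2,4}). For e = v_1 v_5, the set S = {v_2, v_3, v_{3k+1}} ∪ ⋃_{t=2}^{k} {v_{3t−2}, v_{3t}} is a vertex cut of G−e with |S| = 2k+1 and c((G−e)−S) = k; hence τ(G−e) ≤ (2k+1)/k < 2k/(k−1). -/

import Mathlib

open SimpleGraph

def circGraph (n : ℕ) (s : Set (ZMod n)) : SimpleGraph (ZMod n) where
  Adj i j := i ≠ j ∧ (i - j ∈ s ∨ j - i ∈ s)
  symm := ⟨fun i j h => ⟨h.1.symm, h.2.symm⟩⟩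
  loopless := ⟨fun i h => h.1 rfl⟩

/-- Number of connected components of `G - S`. -/
noncomputable def numComp {V : Type*} (G : SimpleGraph V) (S : Set V) : ℕ :=
  Nat.card ((G.induce Sᶜ).ConnectedComponent)

/-- `S` is a vertex cut: removing `S` leaves a disconnected graph. -/
def IsVertexCut {V : Type*} (G : SimpleGraph V) (S : Set V) : Prop :=
  1 < numComp G S

/-- Toughness: minimum of |S| / c(G - S) over vertex cuts `S`. -/
noncomputable def toughness {V : Type*} (G : SimpleGraph V) : ℝ :=
  sInf {x : ℝ | ∃ S : Set V, IsVertexCut G S ∧ x = (S.ncard : ℝ) / (numComp G S : ℝ)}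

def MinimallyTough {V : Type*} (G : SimpleGraph V) (t : ℝ) : Prop :=
  toughness G = t ∧ ∀ e ∈ G.edgeSet, toughness (G.deleteEdges {e}) < t

/-! The vertices outside `S` are `v_1, v_5, v_8, …, v_{3k-1}`. Apart from `v_1 ~ v_5`, which is the
deleted edge, no two of them differ by `±1, ±2, ±4` modulo `3k+1`: the ones other than `v_1` are
all `≡ 2 (mod 3)` and lie too close together for a wrap-around difference. So `(G - e) - S` is
edgeless and has exactly `k` components. -/

namespace SimpleGraph

theorem natCard_connectedComponent_bot {V : Type*} :
    Nat.card (⊥ : SimpleGraph V).ConnectedComponent = Nat.card V :=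
  (Nat.card_eq_of_bijective _
    ⟨fun _ _ h => reachable_bot.mp (ConnectedComponent.eq.mp h),
      fun c => c.exists_rep⟩).symm

end SimpleGraph

theorem numComp_eq_ncard_compl_of_isIndepSet {V : Type*} {G : SimpleGraph V} {S : Set V}
    (h : G.IsIndepSet Sᶜ) : numComp G S = Sᶜ.ncard := by
  have hbot : G.induce Sᶜ = ⊥ := by
    ext ⟨a, ha⟩ ⟨b, hb⟩
    simp only [comap_adj, Function.Embedding.coe_subtype, bot_adj, iff_false]
    exact fun hab => h ha hb hab.ne hab
  rw [numComp, hbot, natCard_connectedComponent_bot, Nat.card_coe_set_eq]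

theorem toughness_le_of_isVertexCut {V : Type*} {G : SimpleGraph V} {S : Set V}
    (hS : IsVertexCut G S) : toughness G ≤ S.ncard / numComp G S :=
  csInf_le ⟨0, by rintro _ ⟨T, -, rfl⟩; positivity⟩ ⟨S, hS, rfl⟩

theorem two_mul_add_one_div_lt_two_mul_div_sub_one {x : ℝ} (hx : 1 < x) :
    (2 * x + 1) / x < 2 * x / (x - 1) := by
  rw [div_lt_div_iff₀ (by linarith) (by linarith)]
  nlinarith

theorem ZMod.eq_natCast_iff_val_eq {n m : ℕ} [NeZero n] (x : ZMod n) (hm : m < n) :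
    x = m ↔ x.val = m := by
  rw [← ZMod.val_natCast_of_lt hm, (ZMod.val_injective n).eq_iff, ZMod.val_natCast_of_lt hm]

theorem ZMod.sub_eq_natCast_iff {n d : ℕ} [NeZero n] (x y : ZMod n) (hd : d < n) :
    x - y = d ↔ x.val = y.val + d ∨ x.val + n = y.val + d := by
  rw [sub_eq_iff_eq_add', ← (ZMod.val_injective n).eq_iff]
  have hx := x.val_lt
  have hdval : (d : ZMod n).val = d := ZMod.val_natCast_of_lt hd
  rcases lt_or_ge (y.val + d) n with hlt | hge
  · rw [ZMod.val_add_of_lt (by rwa [hdval]), hdval]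
    omega
  · have := ZMod.val_add_val_of_le (a := y) (b := d) (by rwa [hdval])
    omega

-- The vertex `v_i` is `i : ZMod (3k+1)`; in particular `v_{3k+1} = 0`.
def cutSet (k : ℕ) : Set (ZMod (3*k+1)) :=
  {v | v = ((2 : ℕ) : ZMod (3*k+1)) ∨ v = ((3 : ℕ) : ZMod (3*k+1)) ∨
    v = ((3*k+1 : ℕ) : ZMod (3*k+1)) ∨
    ∃ t : ℕ, 2 ≤ t ∧ t ≤ k ∧
      (v = ((3*t-2 : ℕ) : ZMod (3*k+1)) ∨ v = ((3*t : ℕ) : ZMod (3*k+1)))}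

def cutSetCompl (k : ℕ) : Finset ℕ :=
  insert 1 ((Finset.Icc 2 k).image fun t => 3*t-1)

theorem mem_cutSetCompl {k m : ℕ} :
    m ∈ cutSetCompl k ↔ m = 1 ∨ ∃ t, 2 ≤ t ∧ t ≤ k ∧ m = 3*t-1 := by
  simp [cutSetCompl, eq_comm, and_assoc]

theorem card_cutSetCompl (k : ℕ) (hk : 1 ≤ k) : (cutSetCompl k).card = k := by
  rw [cutSetCompl, Finset.card_insert_of_notMem, Finset.card_image_of_injOn, Nat.card_Icc]
  · omega
  · intro a ha b hb hab
    simp only [Finset.coe_Icc, Set.mem_Icc] at ha hb hab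
    omega
  · simp only [Finset.mem_image, Finset.mem_Icc, not_exists]
    omega

theorem lt_of_mem_cutSetCompl {k m : ℕ} (hk : 1 ≤ k) (hm : m ∈ cutSetCompl k) : m < 3*k+1 := by
  rcases mem_cutSetCompl.mp hm with h | ⟨t, -, htk, h⟩ <;> omega

theorem mem_cutSet_iff {k : ℕ} (hk : 1 ≤ k) (x : ZMod (3*k+1)) :
    x ∈ cutSet k ↔ x.val = 2 ∨ x.val = 3 ∨ x.val = 0 ∨
      ∃ t, 2 ≤ t ∧ t ≤ k ∧ (x.val = 3*t-2 ∨ x.val = 3*t) := by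
  rw [cutSet, Set.mem_ofPred_eq, ZMod.natCast_self, ← ZMod.val_eq_zero,
    ZMod.eq_natCast_iff_val_eq x (by omega : 2 < 3*k+1),
    ZMod.eq_natCast_iff_val_eq x (by omega : 3 < 3*k+1)]
  refine or_congr_right <| or_congr_right <| or_congr_right <| exists_congr fun t =>
    and_congr_right fun _ => and_congr_right fun htk => ?_
  rw [ZMod.eq_natCast_iff_val_eq x (by omega), ZMod.eq_natCast_iff_val_eq x (by omega)]

theorem notMem_cutSet_iff {k : ℕ} (hk : 1 ≤ k) (x : ZMod (3*k+1)) :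
    x ∉ cutSet k ↔ x.val ∈ cutSetCompl k := by
  rw [mem_cutSet_iff hk, mem_cutSetCompl]
  have hx := x.val_lt
  generalize x.val = m at hx ⊢
  constructor
  · intro h
    simp only [not_or, not_exists, not_and] at h
    obtain ⟨h2, h3, h0, hts⟩ := h
    -- the witnesses `m/3` and `(m+2)/3` rule out `m ≡ 0` and `m ≡ 1 (mod 3)`, except `m = 1`
    have := hts (m/3)
    have := hts ((m+2)/3)
    refine (eq_or_ne m 1).imp id fun h1 => ⟨(m+1)/3, ?_, ?_, ?_⟩ <;> omega
  · rintro (h | ⟨t, ht2, htk, h⟩) (h' | h' | h' | ⟨s, hs2, hsk, h' | h'⟩) <;> omega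

theorem ncard_compl_cutSet (k : ℕ) (hk : 1 ≤ k) : (cutSet k)ᶜ.ncard = k := by
  have hcompl : (cutSet k)ᶜ = ZMod.val ⁻¹' (cutSetCompl k : Set ℕ) := by
    ext x
    exact notMem_cutSet_iff hk x
  rw [hcompl, Set.ncard_preimage_of_injective_subset_range (ZMod.val_injective _),
    Set.ncard_coe_finset, card_cutSetCompl k hk]
  intro m hm
  exact ⟨m, ZMod.val_natCast_of_lt (lt_of_mem_cutSetCompl hk hm)⟩

theorem eq_five_and_eq_one_of_mem_cutSetCompl {k a b d : ℕ} (hk : 2 ≤ k) (ha : a ∈ cutSetCompl k)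
    (hb : b ∈ cutSetCompl k) (hd : d = 1 ∨ d = 2 ∨ d = 4)
    (hab : a = b + d ∨ a + (3*k+1) = b + d) : a = 5 ∧ b = 1 := by
  rw [mem_cutSetCompl] at ha hb
  rcases ha with ha | ⟨t, ht2, htk, ha⟩ <;> rcases hb with hb | ⟨s, hs2, hsk, hb⟩ <;> omega

theorem eq_five_and_eq_one_of_sub_mem {k : ℕ} (hk : 2 ≤ k) {x y : ZMod (3*k+1)}
    (hx : x ∉ cutSet k) (hy : y ∉ cutSet k) (hxy : x - y ∈ ({1, 2, 4} : Set (ZMod (3*k+1)))) :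
    x = ((5 : ℕ) : ZMod (3*k+1)) ∧ y = ((1 : ℕ) : ZMod (3*k+1)) := by
  rw [notMem_cutSet_iff (by omega)] at hx hy
  obtain ⟨d, hd, hxy⟩ : ∃ d : ℕ, (d = 1 ∨ d = 2 ∨ d = 4) ∧ x - y = d := by
    simp only [Set.mem_insert_iff, Set.mem_singleton_iff] at hxy
    rcases hxy with h | h | h
    exacts [⟨1, by simp, by simpa using h⟩, ⟨2, by simp, by simpa using h⟩,
      ⟨4, by simp, by simpa using h⟩]
  rw [ZMod.sub_eq_natCast_iff x y (by omega)] at hxy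
  rw [ZMod.eq_natCast_iff_val_eq x (by omega), ZMod.eq_natCast_iff_val_eq y (by omega)]
  exact eq_five_and_eq_one_of_mem_cutSetCompl hk hx hy hd hxy

theorem isIndepSet_compl_cutSet (k : ℕ) (hk : 2 ≤ k) :
    ((circGraph (3*k+1) {1, 2, 4}).deleteEdges
      {s(((1 : ℕ) : ZMod (3*k+1)), ((5 : ℕ) : ZMod (3*k+1)))}).IsIndepSet (cutSet k)ᶜ := by
  intro x hx y hy _ hadj
  obtain ⟨⟨-, hxy | hyx⟩, hdel⟩ := deleteEdges_adj.mp hadj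
  · obtain ⟨rfl, rfl⟩ := eq_five_and_eq_one_of_sub_mem hk hx hy hxy
    exact hdel Sym2.eq_swap
  · obtain ⟨rfl, rfl⟩ := eq_five_and_eq_one_of_sub_mem hk hy hx hyx
    exact hdel rfl

theorem stmt16 (k : ℕ) (hk : 3 ≤ k) :
    let G := circGraph (3*k+1) {1, 2, 4}
    let G' := G.deleteEdges {s(((1 : ℕ) : ZMod (3*k+1)), ((5 : ℕ) : ZMod (3*k+1)))}
    let S : Set (ZMod (3*k+1)) :=
      {v | v = ((2 : ℕ) : ZMod (3*k+1)) ∨ v = ((3 : ℕ) : ZMod (3*k+1)) ∨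
        v = ((3*k+1 : ℕ) : ZMod (3*k+1)) ∨
        ∃ t : ℕ, 2 ≤ t ∧ t ≤ k ∧
          (v = ((3*t-2 : ℕ) : ZMod (3*k+1)) ∨ v = ((3*t : ℕ) : ZMod (3*k+1)))}
    IsVertexCut G' S ∧ S.ncard = 2*k + 1 ∧ numComp G' S = k ∧
      toughness G' ≤ (2*(k : ℝ) + 1) / (k : ℝ) ∧
      (2*(k : ℝ) + 1) / (k : ℝ) < (2*(k : ℝ)) / ((k : ℝ) - 1) := by
  intro G G' S
  have hcompl : Sᶜ.ncard = k := ncard_compl_cutSet k (by omega)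
  have hnum : numComp G' S = k :=
    (numComp_eq_ncard_compl_of_isIndepSet (isIndepSet_compl_cutSet k (by omega))).trans hcompl
  have hcard : S.ncard = 2*k + 1 := by
    have := Set.ncard_add_ncard_compl S
    rw [hcompl, Nat.card_zmod] at this
    omega
  have hcut : IsVertexCut G' S := by
    rw [IsVertexCut, hnum]
    omega
  refine ⟨hcut, hcard, hnum, ?_, two_mul_add_one_div_lt_two_mul_div_sub_one (by norm_cast; omega)⟩
  calc toughness G' ≤ S.ncard / numComp G' S := toughness_le_of_isVertexCut hcut
    _ = (2*(k : ℝ) + 1) / k := by rw [hcard, hnum]; push_cast; ring
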